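/- The general solution stays on the invariant nonagon: fix κ > 0 and let Ω : ℝ → ℝ be the 9κ-periodic piecewise linear function defined for u ∈ [0, 9κ) by Ω(u) = min( max(κ − u, −κ, u − 4κ), max(κ, u − 5κ), max(9κ − u, κ) ) and extended by Ω(u + 9κ) = Ω(u). Then for every u ∈ ℝ, the point (Ω(u), Ω(u − 2κ)) lies on Υ_κ, i.e. min( H(Ω(u), Ω(u−2κ)), H(Ω(u−2κ), Ω(u)) ) = κ. -/

import Mathlib

/-!
`Ω` is `9κ`-periodic, so it suffices to take `u ∈ [0, 9κ)`. On each of the nine intervals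
`[nκ, (n+1)κ]` both `Ω(u)` and `Ω(u - 2κ)` are affine in `u`, and the point
`(Ω(u), Ω(u - 2κ))` runs along one edge of the nonagon with vertices `(κ, 2κ)`, `(0, κ)`,
`(-κ, κ)`, `(-κ, 0)`, `(0, -κ)`, `(κ, -κ)`, `(κ, 0)`, `(2κ, κ)`, `(κ, κ)`. Since `K` is
symmetric, it remains to check `K = κ` on five of these edges.
-/

/-- `H(x,y) = max(x, -y, -x+y, -x-y)`. -/
noncomputable def H (x y : ℝ) : ℝ :=
  max x (max (-y) (max (-x + y) (-x - y)))

/-- The `9κ`-periodic piecewise linear function given for `u ∈ [0, 9κ)` by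
`Ω(u) = min( max(κ−u, −κ, u−4κ), max(κ, u−5κ), max(9κ−u, κ) )` and extended to
all of `ℝ` by `Ω(u + 9κ) = Ω(u)` (here `u − 9κ⌊u/(9κ)⌋` is the representative
of `u` in `[0, 9κ)`). -/
noncomputable def Omega (κ u : ℝ) : ℝ :=
  let v := u - 9 * κ * ⌊u / (9 * κ)⌋
  min (min (max (max (κ - v) (-κ)) (v - 4 * κ)) (max κ (v - 5 * κ)))
    (max (9 * κ - v) κ)

open Set

noncomputable def K (x y : ℝ) : ℝ := min (H x y) (H y x)

theorem K_comm (x y : ℝ) : K x y = K y x := min_comm _ _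

section Edges

variable {κ x y : ℝ}

theorem K_neg_left_of_nonneg_of_le (h₀ : 0 ≤ y) (h₁ : y ≤ κ) : K (-κ) y = κ := by
  grind [K, H]

theorem K_left_of_neg_le_of_nonpos (h₀ : -κ ≤ y) (h₁ : y ≤ 0) : K κ y = κ := by
  grind [K, H]

theorem K_left_of_le_of_le_two_mul (h₀ : κ ≤ y) (h₁ : y ≤ 2 * κ) : K κ y = κ := by
  grind [K, H]

theorem K_of_sub_eq (h : x - y = κ) (h₀ : κ ≤ x) (h₁ : x ≤ 2 * κ) : K x y = κ := by
  grind [K, H]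

theorem K_of_add_eq (h : x + y = -κ) (h₀ : -κ ≤ x) (h₁ : x ≤ 0) : K x y = κ := by
  grind [K, H]

end Edges

noncomputable def Omega₀ (κ v : ℝ) : ℝ :=
  min (min (max (max (κ - v) (-κ)) (v - 4 * κ)) (max κ (v - 5 * κ))) (max (9 * κ - v) κ)

theorem Omega_eq_Omega₀ (κ u : ℝ) : Omega κ u = Omega₀ κ (u - 9 * κ * ⌊u / (9 * κ)⌋) := rfl

theorem Omega_eq_Omega₀_of_mem_Ico {κ v : ℝ} (hv : v ∈ Ico 0 (9 * κ)) :
    Omega κ v = Omega₀ κ v := by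
  have hκ : 0 < 9 * κ := hv.1.trans_lt hv.2
  have : ⌊v / (9 * κ)⌋ = 0 :=
    Int.floor_eq_zero_iff.2 ⟨div_nonneg hv.1 hκ.le, (div_lt_one hκ).2 hv.2⟩
  rw [Omega_eq_Omega₀, this, Int.cast_zero, mul_zero, sub_zero]

theorem Omega_periodic (κ : ℝ) : Function.Periodic (Omega κ) (9 * κ) := by
  intro u
  rcases eq_or_ne κ 0 with rfl | hκ
  · simp
  have : (u + 9 * κ) / (9 * κ) = u / (9 * κ) + 1 := by field_simp
  rw [Omega_eq_Omega₀, Omega_eq_Omega₀, this, Int.floor_add_one]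
  congr 1
  push_cast
  ring

section Pieces

variable {κ v : ℝ}

theorem Omega₀_of_mem_Icc_zero_two (hv : v ∈ Icc 0 (2 * κ)) : Omega₀ κ v = κ - v := by
  grind [Omega₀]

theorem Omega₀_of_mem_Icc_two_three (hv : v ∈ Icc (2 * κ) (3 * κ)) : Omega₀ κ v = -κ := by
  grind [Omega₀]

theorem Omega₀_of_mem_Icc_three_five (hv : v ∈ Icc (3 * κ) (5 * κ)) :
    Omega₀ κ v = v - 4 * κ := by
  grind [Omega₀]

theorem Omega₀_of_mem_Icc_five_six (hv : v ∈ Icc (5 * κ) (6 * κ)) : Omega₀ κ v = κ := by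
  grind [Omega₀]

theorem Omega₀_of_mem_Icc_six_seven (hv : v ∈ Icc (6 * κ) (7 * κ)) :
    Omega₀ κ v = v - 5 * κ := by
  grind [Omega₀]

theorem Omega₀_of_mem_Icc_seven_eight (hv : v ∈ Icc (7 * κ) (8 * κ)) :
    Omega₀ κ v = 9 * κ - v := by
  grind [Omega₀]

theorem Omega₀_of_mem_Icc_eight_nine (hv : v ∈ Icc (8 * κ) (9 * κ)) : Omega₀ κ v = κ := by
  grind [Omega₀]

end Pieces

theorem K_Omega₀_Omega₀_sub {κ v : ℝ} (h₀ : 2 * κ ≤ v) (h₁ : v ≤ 9 * κ) :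
    K (Omega₀ κ v) (Omega₀ κ (v - 2 * κ)) = κ := by
  obtain h | h | h | h | h | h | h : v ≤ 3 * κ ∨ 3 * κ ≤ v ∧ v ≤ 4 * κ ∨
      4 * κ ≤ v ∧ v ≤ 5 * κ ∨ 5 * κ ≤ v ∧ v ≤ 6 * κ ∨ 6 * κ ≤ v ∧ v ≤ 7 * κ ∨
      7 * κ ≤ v ∧ v ≤ 8 * κ ∨ 8 * κ ≤ v := by
    grind
  · rw [Omega₀_of_mem_Icc_two_three ⟨h₀, h⟩,
      Omega₀_of_mem_Icc_zero_two ⟨by linarith, by linarith⟩]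
    exact K_neg_left_of_nonneg_of_le (by linarith) (by linarith)
  · rw [Omega₀_of_mem_Icc_three_five ⟨h.1, by linarith⟩,
      Omega₀_of_mem_Icc_zero_two ⟨by linarith, by linarith⟩]
    exact K_of_add_eq (by ring) (by linarith) (by linarith)
  · rw [Omega₀_of_mem_Icc_three_five ⟨by linarith, h.2⟩,
      Omega₀_of_mem_Icc_two_three ⟨by linarith, by linarith⟩, K_comm]
    exact K_neg_left_of_nonneg_of_le (by linarith) (by linarith)
  · rw [Omega₀_of_mem_Icc_five_six h, Omega₀_of_mem_Icc_three_five ⟨by linarith, by linarith⟩]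
    exact K_left_of_neg_le_of_nonpos (by linarith) (by linarith)
  · rw [Omega₀_of_mem_Icc_six_seven h, Omega₀_of_mem_Icc_three_five ⟨by linarith, by linarith⟩]
    exact K_of_sub_eq (by ring) (by linarith) (by linarith)
  · rw [Omega₀_of_mem_Icc_seven_eight h, Omega₀_of_mem_Icc_five_six ⟨by linarith, by linarith⟩,
      K_comm]
    exact K_left_of_le_of_le_two_mul (by linarith) (by linarith)
  · rw [Omega₀_of_mem_Icc_eight_nine ⟨h, h₁⟩,
      Omega₀_of_mem_Icc_six_seven ⟨by linarith, by linarith⟩]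
    exact K_left_of_le_of_le_two_mul (by linarith) (by linarith)

theorem K_Omega₀_Omega₀_add {κ v : ℝ} (h₀ : 0 ≤ v) (h₁ : v ≤ 2 * κ) :
    K (Omega₀ κ v) (Omega₀ κ (v + 7 * κ)) = κ := by
  rw [Omega₀_of_mem_Icc_zero_two ⟨h₀, h₁⟩, K_comm]
  rcases le_total v κ with h | h
  · rw [Omega₀_of_mem_Icc_seven_eight ⟨by linarith, by linarith⟩]
    exact K_of_sub_eq (by ring) (by linarith) (by linarith)
  · rw [Omega₀_of_mem_Icc_eight_nine ⟨by linarith, by linarith⟩]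
    exact K_left_of_neg_le_of_nonpos (by linarith) (by linarith)

theorem K_Omega_Omega_sub_of_mem_Ico {κ v : ℝ} (hv : v ∈ Ico 0 (9 * κ)) :
    K (Omega κ v) (Omega κ (v - 2 * κ)) = κ := by
  rw [Omega_eq_Omega₀_of_mem_Ico hv]
  rcases lt_or_ge v (2 * κ) with h | h
  · rw [← Omega_periodic κ (v - 2 * κ), show v - 2 * κ + 9 * κ = v + 7 * κ by ring,
      Omega_eq_Omega₀_of_mem_Ico ⟨by linarith [hv.1], by linarith⟩]
    exact K_Omega₀_Omega₀_add hv.1 h.le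
  · rw [Omega_eq_Omega₀_of_mem_Ico ⟨by linarith, by linarith [hv.2]⟩]
    exact K_Omega₀_Omega₀_sub h hv.2.le

/-- The general solution stays on the invariant nonagon: the point
`(Ω(u), Ω(u − 2κ))` lies on `Υ_κ` for every `u`. -/
theorem general_solution_on_nonagon (κ : ℝ) (hκ : 0 < κ) (u : ℝ) :
    min (H (Omega κ u) (Omega κ (u - 2 * κ)))
      (H (Omega κ (u - 2 * κ)) (Omega κ u)) = κ := by
  have hper : Function.Periodic (fun u ↦ K (Omega κ u) (Omega κ (u - 2 * κ))) (9 * κ) := by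
    intro u
    simp only [Omega_periodic κ u, add_sub_right_comm u, Omega_periodic κ (u - 2 * κ)]
  obtain ⟨v, hv, huv⟩ := hper.exists_mem_Ico₀ (by positivity) u
  exact huv.trans (K_Omega_Omega_sub_of_mem_Ico hv)
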